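/- (Dimension reduction for decoupling, Fubini–Minkowski form.) Let $p\ge q\ge 1$. Let $Q_1:\mathbb{R}^{d_0}\to\mathbb{R}^{d_1}$ and $Q_2:\mathbb{R}^{d_0}\to\mathbb{R}^{d_2}$ be measurable, and let $E^{(1)},E^{(2)}$ be the extension operators $E^{(1)}_Ug(x_0,x_1)=\int_U g(u)e(x_0\cdot u+x_1\cdot Q_1(u))du$ and $E^{(2)}_Uh(x_0,x_1,x_2)=\int_U h(u)e(x_0\cdot u+x_1\cdot Q_1(u)+x_2\cdot Q_2(u))du$. Fix a measurable partition $U_1,\ldots,U_l$ of $[0,1]^{d_0}$ and a measurable set $B\subset\mathbb{R}^{d_0+d_1}$. If $C$ is such that $\|E^{(1)}_{[0,1]^{d_0}}g\|_{L^p(B)}\le C\big(\sum_i\|E^{(1)}_{U_i}g\|_{L^p(B)}^q\big)^{1/q}$ for all integrable $g$, then for every measurable $B'\subset\mathbb{R}^{d_2}$ and every integrable $h$, $\|E^{(2)}_{[0,1]^{d_0}}h\|_{L^p(B\times B')}\le C\big(\sum_i\|E^{(2)}_{U_i}h\|_{L^p(B\times B')}^q\big)^{1/q}$. -/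

import Mathlib

open MeasureTheory
open scoped ENNReal

/-!
Freezing the last variable `x₂` turns `E²_S h (·, ·, x₂)` into `E¹_S` of the modulated function
`h · e(x₂ · Q₂)`, so the hypothesis bounds every slice. By Fubini the `L^p(B × B')` norm is the
`L^p(B')` norm of the slice norms, and Minkowski's inequality in `L^{p/q}` (here `p ≥ q`) moves
the `ℓ^q` sum over the pieces outside that norm.
-/

/-- `e(z) = e^{2πiz}`. -/
noncomputable def e₂ (z : ℝ) : ℂ := Complex.exp (2 * Real.pi * Complex.I * z)

/-- The unit cube `[0,1]^d`. -/
def unitCube (d : ℕ) : Set (Fin d → ℝ) := Set.univ.pi fun _ => Set.Icc (0 : ℝ) 1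

lemma e₂_add (s t : ℝ) : e₂ (s + t) = e₂ s * e₂ t := by
  rw [e₂, e₂, e₂, ← Complex.exp_add]; congr 1; push_cast; ring

lemma norm_e₂ (t : ℝ) : ‖e₂ t‖ = 1 := by
  rw [e₂, show 2 * (Real.pi : ℂ) * Complex.I * t = ((2 * Real.pi * t : ℝ) : ℂ) * Complex.I by
    push_cast; ring, Complex.norm_exp_ofReal_mul_I]

@[fun_prop]
lemma measurable_e₂ : Measurable e₂ := by unfold e₂; fun_prop

section MixedNorm

variable {α γ E ι : Type*} [MeasurableSpace α] [MeasurableSpace γ] {μ : Measure α} {ν : Measure γ}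
  [TopologicalSpace E] [ContinuousENorm E] [Fintype ι] {p q : ℝ}

lemma eLpNorm_ofReal_eq_lintegral_rpow {ε : Type*} [ENorm ε] (f : γ → ε) (hp : 0 < p) :
    eLpNorm f (ENNReal.ofReal p) ν = (∫⁻ y, ‖f y‖ₑ ^ p ∂ν) ^ (1 / p) := by
  rw [eLpNorm_eq_lintegral_rpow_enorm_toReal (by simpa using hp) ENNReal.ofReal_ne_top,
    ENNReal.toReal_ofReal hp.le]

lemma eLpNorm_ennreal_const_mul {f : γ → ℝ≥0∞} (hf : AEMeasurable f ν) (C : ℝ≥0∞) (hp : 0 < p) :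
    eLpNorm (fun y => C * f y) (ENNReal.ofReal p) ν = C * eLpNorm f (ENNReal.ofReal p) ν := by
  simp only [eLpNorm_ofReal_eq_lintegral_rpow _ hp, enorm_eq_self,
    ENNReal.mul_rpow_of_nonneg _ _ hp.le]
  rw [lintegral_const_mul'' _ (hf.pow_const p), ENNReal.mul_rpow_of_nonneg _ _ (by positivity),
    ← ENNReal.rpow_mul, mul_one_div_cancel hp.ne', ENNReal.rpow_one]

-- Minkowski's inequality in `L^{p/q}`, applied to the functions `g i ^ q`.
lemma eLpNorm_lq_sum_le (hq : 1 ≤ q) (hpq : q ≤ p) {g : ι → γ → ℝ≥0∞}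
    (hg : ∀ i, AEMeasurable (g i) ν) :
    eLpNorm (fun y => (∑ i, g i y ^ q) ^ (1 / q)) (ENNReal.ofReal p) ν ≤
      (∑ i, eLpNorm (g i) (ENNReal.ofReal p) ν ^ q) ^ (1 / q) := by
  have hq0 : 0 < q := by linarith
  calc eLpNorm (fun y => (∑ i, g i y ^ q) ^ (1 / q)) (ENNReal.ofReal p) ν
      = eLpNorm (∑ i, fun y => g i y ^ q) (ENNReal.ofReal (p / q)) ν ^ (1 / q) := by
        rw [div_eq_mul_one_div p q, ENNReal.ofReal_mul (by linarith),
          ← eLpNorm_enorm_rpow _ (by positivity)]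
        simp [enorm_eq_self]
    _ ≤ (∑ i, eLpNorm (fun y => g i y ^ q) (ENNReal.ofReal (p / q)) ν) ^ (1 / q) := by
        gcongr
        exact eLpNorm_sum_le (fun i _ => ((hg i).pow_const q).aestronglyMeasurable)
          (by rw [ENNReal.one_le_ofReal]; exact (one_le_div hq0).mpr hpq)
    _ = (∑ i, eLpNorm (g i) (ENNReal.ofReal p) ν ^ q) ^ (1 / q) := by
        congr 2 with i
        rw [← div_mul_cancel₀ p hq0.ne', ENNReal.ofReal_mul (div_pos (by linarith) hq0).le,
          ← eLpNorm_enorm_rpow _ hq0, mul_div_cancel_right₀ _ hq0.ne']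
        simp [enorm_eq_self]

variable [SFinite μ] [SFinite ν]

lemma aemeasurable_eLpNorm_slice {F : α × γ → E}
    (hF : AEStronglyMeasurable F (μ.prod ν)) (hp : 0 < p) :
    AEMeasurable (fun y => eLpNorm (fun x => F (x, y)) (ENNReal.ofReal p) μ) ν := by
  simp only [eLpNorm_ofReal_eq_lintegral_rpow _ hp]
  exact ((hF.enorm.pow_const p).lintegral_prod_left').pow_const _

lemma eLpNorm_prod_eq_eLpNorm_eLpNorm_slice {F : α × γ → E}
    (hF : AEStronglyMeasurable F (μ.prod ν)) (hp : 0 < p) :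
    eLpNorm F (ENNReal.ofReal p) (μ.prod ν) =
      eLpNorm (fun y => eLpNorm (fun x => F (x, y)) (ENNReal.ofReal p) μ) (ENNReal.ofReal p) ν := by
  simp only [eLpNorm_ofReal_eq_lintegral_rpow _ hp, enorm_eq_self, ← ENNReal.rpow_mul,
    one_div_mul_cancel hp.ne', ENNReal.rpow_one]
  rw [lintegral_prod_symm _ (hF.enorm.pow_const p)]

theorem eLpNorm_prod_le_of_forall_slice_le (hq : 1 ≤ q) (hpq : q ≤ p) {F : α × γ → E}
    {G : ι → α × γ → E} (hF : AEStronglyMeasurable F (μ.prod ν))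
    (hG : ∀ i, AEStronglyMeasurable (G i) (μ.prod ν)) (C : ℝ≥0∞)
    (hslice : ∀ y, eLpNorm (fun x => F (x, y)) (ENNReal.ofReal p) μ ≤
      C * (∑ i, eLpNorm (fun x => G i (x, y)) (ENNReal.ofReal p) μ ^ q) ^ (1 / q)) :
    eLpNorm F (ENNReal.ofReal p) (μ.prod ν) ≤
      C * (∑ i, eLpNorm (G i) (ENNReal.ofReal p) (μ.prod ν) ^ q) ^ (1 / q) := by
  have hp : 0 < p := by linarith
  have hGslice i := aemeasurable_eLpNorm_slice (hG i) hp
  simp only [eLpNorm_prod_eq_eLpNorm_eLpNorm_slice hF hp,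
    eLpNorm_prod_eq_eLpNorm_eLpNorm_slice (hG _) hp]
  calc _ ≤ eLpNorm (fun y => C * (∑ i, eLpNorm (fun x => G i (x, y)) (ENNReal.ofReal p) μ ^ q)
          ^ (1 / q)) (ENNReal.ofReal p) ν :=
        eLpNorm_mono_enorm fun y => by simpa only [enorm_eq_self] using hslice y
    _ ≤ _ := by
        rw [eLpNorm_ennreal_const_mul (by fun_prop) C hp]
        gcongr; exact eLpNorm_lq_sum_le hq hpq hGslice

end MixedNorm

lemma MeasureTheory.Integrable.mul_e₂ {V : Type*} [MeasurableSpace V] {ν : Measure V} {h : V → ℂ}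
    (hh : Integrable h ν) {φ : V → ℝ} (hφ : Measurable φ) :
    Integrable (fun u => h u * e₂ (φ u)) ν :=
  hh.mul_bdd (c := 1) (measurable_e₂.comp hφ).aestronglyMeasurable
    (ae_of_all _ fun _ => (norm_e₂ _).le)

lemma aestronglyMeasurable_integral_mul_e₂ {X V : Type*} [MeasurableSpace X] [MeasurableSpace V]
    {μ : Measure X} {ν : Measure V} [SFinite μ] [SFinite ν] {h : V → ℂ}
    (hh : AEStronglyMeasurable h ν) {φ : X → V → ℝ} (hφ : Measurable (Function.uncurry φ)) :
    AEStronglyMeasurable (fun x => ∫ u, h u * e₂ (φ x u) ∂ν) μ :=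
  (hh.comp_snd.mul (measurable_e₂.comp hφ).aestronglyMeasurable).integral_prod_right'

theorem stmt12_general {d₀ d₁ d₂ : ℕ} (p q : ℝ) (hq : 1 ≤ q) (hpq : q ≤ p)
    (Q₁ : (Fin d₀ → ℝ) → (Fin d₁ → ℝ)) (Q₂ : (Fin d₀ → ℝ) → (Fin d₂ → ℝ))
    (hQ₁ : Measurable Q₁) (hQ₂ : Measurable Q₂)
    {l : ℕ} (U : Fin l → Set (Fin d₀ → ℝ))
    (hUcover : (⋃ i, U i) = unitCube d₀)
    (B : Set ((Fin d₀ → ℝ) × (Fin d₁ → ℝ)))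
    (C : ℝ≥0∞)
    (hC : ∀ g : (Fin d₀ → ℝ) → ℂ, IntegrableOn g (unitCube d₀) →
      eLpNorm (fun x : (Fin d₀ → ℝ) × (Fin d₁ → ℝ) =>
          ∫ u in unitCube d₀,
            g u * e₂ ((∑ i, x.1 i * u i) + ∑ j, x.2 j * Q₁ u j))
        (ENNReal.ofReal p) (volume.restrict B)
      ≤ C * (∑ i, (eLpNorm (fun x : (Fin d₀ → ℝ) × (Fin d₁ → ℝ) =>
          ∫ u in U i,
            g u * e₂ ((∑ i', x.1 i' * u i') + ∑ j, x.2 j * Q₁ u j))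
        (ENNReal.ofReal p) (volume.restrict B)) ^ q) ^ (1 / q)) :
    ∀ B' : Set (Fin d₂ → ℝ), MeasurableSet B' →
      ∀ h : (Fin d₀ → ℝ) → ℂ, IntegrableOn h (unitCube d₀) →
      eLpNorm (fun x : ((Fin d₀ → ℝ) × (Fin d₁ → ℝ)) × (Fin d₂ → ℝ) =>
          ∫ u in unitCube d₀,
            h u * e₂ ((∑ i, x.1.1 i * u i) + (∑ j, x.1.2 j * Q₁ u j)
              + ∑ k, x.2 k * Q₂ u k))
        (ENNReal.ofReal p) (volume.restrict (B ×ˢ B'))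
      ≤ C * (∑ i, (eLpNorm (fun x : ((Fin d₀ → ℝ) × (Fin d₁ → ℝ)) × (Fin d₂ → ℝ) =>
          ∫ u in U i,
            h u * e₂ ((∑ i', x.1.1 i' * u i') + (∑ j, x.1.2 j * Q₁ u j)
              + ∑ k, x.2 k * Q₂ u k))
        (ENNReal.ofReal p) (volume.restrict (B ×ˢ B'))) ^ q) ^ (1 / q) := by
  intro B' hB' h hh
  have hUsub i : U i ⊆ unitCube d₀ := hUcover ▸ Set.subset_iUnion U i
  have hphase : Measurable fun z : (((Fin d₀ → ℝ) × (Fin d₁ → ℝ)) × (Fin d₂ → ℝ)) × (Fin d₀ → ℝ) =>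
      (∑ i, z.1.1.1 i * z.2 i) + (∑ j, z.1.1.2 j * Q₁ z.2 j) + ∑ k, z.1.2 k * Q₂ z.2 k := by
    fun_prop
  rw [Measure.volume_eq_prod, ← Measure.prod_restrict]
  refine eLpNorm_prod_le_of_forall_slice_le hq hpq
    (aestronglyMeasurable_integral_mul_e₂ hh.1 hphase)
    (fun i => aestronglyMeasurable_integral_mul_e₂ (hh.1.mono_set (hUsub i)) hphase) C fun y => ?_
  have hmodulate (S : Set (Fin d₀ → ℝ)) :
      (fun x : (Fin d₀ → ℝ) × (Fin d₁ → ℝ) => ∫ u in S,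
        h u * e₂ ((∑ i, x.1 i * u i) + (∑ j, x.2 j * Q₁ u j) + ∑ k, y k * Q₂ u k)) =
      fun x => ∫ u in S,
        (h u * e₂ (∑ k, y k * Q₂ u k)) * e₂ ((∑ i, x.1 i * u i) + ∑ j, x.2 j * Q₁ u j) := by
    ext x; congr 1 with u; rw [e₂_add]; ring
  simp only [hmodulate]
  exact hC _ (Integrable.mul_e₂ hh (by fun_prop))

theorem stmt12 {d₀ d₁ d₂ : ℕ} (p q : ℝ) (hq : 1 ≤ q) (hpq : q ≤ p)
    (Q₁ : (Fin d₀ → ℝ) → (Fin d₁ → ℝ)) (Q₂ : (Fin d₀ → ℝ) → (Fin d₂ → ℝ))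
    (hQ₁ : Measurable Q₁) (hQ₂ : Measurable Q₂)
    {l : ℕ} (U : Fin l → Set (Fin d₀ → ℝ)) (hUm : ∀ i, MeasurableSet (U i))
    (hUdisj : Pairwise (Function.onFun Disjoint U))
    (hUcover : (⋃ i, U i) = unitCube d₀)
    (B : Set ((Fin d₀ → ℝ) × (Fin d₁ → ℝ))) (hB : MeasurableSet B)
    (C : ℝ≥0∞)
    (hC : ∀ g : (Fin d₀ → ℝ) → ℂ, IntegrableOn g (unitCube d₀) →
      eLpNorm (fun x : (Fin d₀ → ℝ) × (Fin d₁ → ℝ) =>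
          ∫ u in unitCube d₀,
            g u * e₂ ((∑ i, x.1 i * u i) + ∑ j, x.2 j * Q₁ u j))
        (ENNReal.ofReal p) (volume.restrict B)
      ≤ C * (∑ i, (eLpNorm (fun x : (Fin d₀ → ℝ) × (Fin d₁ → ℝ) =>
          ∫ u in U i,
            g u * e₂ ((∑ i', x.1 i' * u i') + ∑ j, x.2 j * Q₁ u j))
        (ENNReal.ofReal p) (volume.restrict B)) ^ q) ^ (1 / q)) :
    ∀ B' : Set (Fin d₂ → ℝ), MeasurableSet B' →
      ∀ h : (Fin d₀ → ℝ) → ℂ, IntegrableOn h (unitCube d₀) →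
      eLpNorm (fun x : ((Fin d₀ → ℝ) × (Fin d₁ → ℝ)) × (Fin d₂ → ℝ) =>
          ∫ u in unitCube d₀,
            h u * e₂ ((∑ i, x.1.1 i * u i) + (∑ j, x.1.2 j * Q₁ u j)
              + ∑ k, x.2 k * Q₂ u k))
        (ENNReal.ofReal p) (volume.restrict (B ×ˢ B'))
      ≤ C * (∑ i, (eLpNorm (fun x : ((Fin d₀ → ℝ) × (Fin d₁ → ℝ)) × (Fin d₂ → ℝ) =>
          ∫ u in U i,
            h u * e₂ ((∑ i', x.1.1 i' * u i') + (∑ j, x.1.2 j * Q₁ u j)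
              + ∑ k, x.2 k * Q₂ u k))
        (ENNReal.ofReal p) (volume.restrict (B ×ˢ B'))) ^ q) ^ (1 / q) :=
  stmt12_general p q hq hpq Q₁ Q₂ hQ₁ hQ₂ U hUcover B C hC
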